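/- Let ν_{0,0},ν_{0,1},ν_{0,2} ∈ ℂ with ν_{0,0}+ν_{0,1}+ν_{0,2}=0, let ν_{1,0},ν_{1,1},ν_{1,2} ∈ ℂ with ν_{1,0}+ν_{1,1}+ν_{1,2}=0, and let q,p ∈ ℂ with q ≠ 0 and q ≠ 1. Define the 3×3 complex matrices A₀ = [[0, −p²−(ν_{0,0}ν_{0,1}+ν_{0,1}ν_{0,2}+ν_{0,2}ν_{0,0}), (p+ν_{0,0})(p+ν_{0,1})(p+ν_{0,2})/q],[1, −p, 0],[0, −q, p]] and A₁ = [[0, −p²−(ν_{1,0}ν_{1,1}+ν_{1,1}ν_{1,2}+ν_{1,2}ν_{1,0}), (p−ν_{1,0})(p−ν_{1,1})(p−ν_{1,2})/(q−1)],[1, −p, 0],[0, 1−q, p]]. Then the characteristic polynomial of −A₀ equals (X−ν_{0,0})(X−ν_{0,1})(X−ν_{0,2}), and the characteristic polynomial of A₁ equals (X−ν_{1,0})(X−ν_{1,1})(X−ν_{1,2}). -/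
import Mathlib

open Polynomial

theorem stmt_13 (ν00 ν01 ν02 ν10 ν11 ν12 q p : ℂ)
    (h0 : ν00 + ν01 + ν02 = 0) (h1 : ν10 + ν11 + ν12 = 0)
    (hq0 : q ≠ 0) (hq1 : q ≠ 1) :
    Matrix.charpoly
        (-(!![0, -p ^ 2 - (ν00 * ν01 + ν01 * ν02 + ν02 * ν00),
              (p + ν00) * (p + ν01) * (p + ν02) / q;
            1, -p, 0;
            0, -q, p] : Matrix (Fin 3) (Fin 3) ℂ))
      = (X - C ν00) * (X - C ν01) * (X - C ν02) ∧
    Matrix.charpoly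
        (!![0, -p ^ 2 - (ν10 * ν11 + ν11 * ν12 + ν12 * ν10),
            (p - ν10) * (p - ν11) * (p - ν12) / (q - 1);
          1, -p, 0;
          0, 1 - q, p] : Matrix (Fin 3) (Fin 3) ℂ)
      = (X - C ν10) * (X - C ν11) * (X - C ν12) := by
  have h02 : ν02 = -(ν00 + ν01) := by linear_combination h0
  have h12 : ν12 = -(ν10 + ν11) := by linear_combination h1
  have hq1' : q - 1 ≠ 0 := sub_ne_zero.mpr hq1
  subst h02 h12
  constructor <;>
  · rw [Matrix.charpoly, Matrix.det_fin_three]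
    simp [Matrix.charmatrix_apply, Matrix.diagonal_apply, Fin.ext_iff]
    apply Polynomial.funext
    intro x
    simp only [eval_mul, eval_add, eval_sub, eval_neg, eval_X, eval_C, eval_one, eval_zero,
      eval_pow]
    field_simp
    ring
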